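/- arXiv:2408.13815 — 2 statements merged into one kernel-verified Lean document; each statement's English description precedes it below -/
import Mathlib

section
/- Let F(κ) := H_k(κ)^{1/k} for 1 ≤ k ≤ n, defined on the positive cone Γ_n ⊂ ℝ^n, and let F^{ii} := ∂F/∂κ_i. Then for all κ ∈ Γ_n, Σ_{i=1}^n F^{ii}(κ) · κ_i^2 ≥ F(κ)^2. -/
open Finset Real

/-- k-th elementary symmetric polynomial of κ ∈ ℝⁿ. -/
noncomputable def esymm (n : ℕ) (k : ℕ) (κ : Fin n → ℝ) : ℝ :=
  ∑ s ∈ Finset.univ.powersetCard k, ∏ i ∈ s, κ i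

/-- k-th elementary symmetric polynomial of κ with the i-th entry deleted. -/
noncomputable def esymmDel (n : ℕ) (i : Fin n) (k : ℕ) (κ : Fin n → ℝ) : ℝ :=
  ∑ s ∈ (Finset.univ.erase i).powersetCard k, ∏ j ∈ s, κ j

/-- Normalized k-th elementary symmetric polynomial H_k = σ_k / C(n,k). -/
noncomputable def Hnorm (n : ℕ) (k : ℕ) (κ : Fin n → ℝ) : ℝ :=
  esymm n k κ / (n.choose k)

/-- The curvature function F = H_k^{1/k}. -/
noncomputable def Fcurv (n k : ℕ) (κ : Fin n → ℝ) : ℝ :=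
  (Hnorm n k κ) ^ ((1 : ℝ) / k)

/-- F^{ii} : the partial derivative of F with respect to κ_i. -/
noncomputable def Fd (n k : ℕ) (κ : Fin n → ℝ) (i : Fin n) : ℝ :=
  fderiv ℝ (Fcurv n k) κ (Pi.single i 1)

lemma esymm_pos (n k : ℕ) (hkn : k ≤ n) (κ : Fin n → ℝ) (hκ : ∀ i, 0 < κ i) :
    0 < esymm n k κ := by
  unfold esymm
  apply Finset.sum_pos
  · intro s _
    exact Finset.prod_pos fun i _ => hκ i
  · rw [Finset.powersetCard_nonempty]
    simpa using hkn

lemma hasFDerivAt_esymm (n k : ℕ) (κ : Fin n → ℝ) :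
    HasFDerivAt (esymm n k)
      (∑ s ∈ Finset.univ.powersetCard k, ∑ i ∈ s,
        (∏ j ∈ s.erase i, κ j) • (ContinuousLinearMap.proj i : ((Fin n → ℝ) →L[ℝ] ℝ))) κ := by
  apply HasFDerivAt.fun_sum
  intro s _
  exact HasFDerivAt.finset_prod fun i _ => hasFDerivAt_apply i κ

lemma deriv_apply_single (n k : ℕ) (hk1 : 1 ≤ k) (κ : Fin n → ℝ) (i : Fin n) :
    (∑ s ∈ Finset.univ.powersetCard k, ∑ j ∈ s,
        (∏ l ∈ s.erase j, κ l) • (ContinuousLinearMap.proj j : ((Fin n → ℝ) →L[ℝ] ℝ)))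
      (Pi.single i 1) = esymmDel n i (k - 1) κ := by
  classical
  simp only [ContinuousLinearMap.coe_sum', Finset.sum_apply, ContinuousLinearMap.coe_smul',
    Pi.smul_apply, ContinuousLinearMap.proj_apply, smul_eq_mul, Pi.single_apply]
  have h1 : ∀ s ∈ Finset.univ.powersetCard k,
      (∑ j ∈ s, (∏ l ∈ s.erase j, κ l) * (if j = i then (1:ℝ) else 0))
        = if i ∈ s then ∏ l ∈ s.erase i, κ l else 0 := by
    intro s _
    rw [← Finset.sum_ite_eq' s i (fun j => ∏ l ∈ s.erase j, κ l)]
    exact Finset.sum_congr rfl fun j _ => by by_cases h : j = i <;> simp [h]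
  rw [Finset.sum_congr rfl h1, ← Finset.sum_filter]
  unfold esymmDel
  apply Finset.sum_nbij' (fun s => s.erase i) (fun t => insert i t)
  · intro s hs
    simp only [Finset.mem_filter, Finset.mem_powersetCard] at hs
    rw [Finset.mem_powersetCard]
    exact ⟨Finset.erase_subset_erase i hs.1.1,
      by rw [Finset.card_erase_of_mem hs.2, hs.1.2]⟩
  · intro t ht
    rw [Finset.mem_powersetCard] at ht
    have hit : i ∉ t := fun h => (Finset.mem_erase.mp (ht.1 h)).1 rfl
    simp only [Finset.mem_filter, Finset.mem_powersetCard]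
    refine ⟨⟨Finset.subset_univ _, ?_⟩, Finset.mem_insert_self i t⟩
    rw [Finset.card_insert_of_notMem hit, ht.2]
    omega
  · intro s hs
    simp only [Finset.mem_filter] at hs
    exact Finset.insert_erase hs.2
  · intro t ht
    rw [Finset.mem_powersetCard] at ht
    have hit : i ∉ t := fun h => (Finset.mem_erase.mp (ht.1 h)).1 rfl
    exact Finset.erase_insert hit
  · intro s _
    rfl

lemma hasFDerivAt_Fcurv (n k : ℕ) (hk1 : 1 ≤ k) (hkn : k ≤ n) (κ : Fin n → ℝ)
    (hκ : ∀ i, 0 < κ i) :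
    HasFDerivAt (Fcurv n k)
      ((((1:ℝ)/k) * Hnorm n k κ ^ ((1:ℝ)/k - 1)) •
        (((n.choose k : ℝ))⁻¹ •
          (∑ s ∈ Finset.univ.powersetCard k, ∑ i ∈ s,
            (∏ j ∈ s.erase i, κ j) • (ContinuousLinearMap.proj i : ((Fin n → ℝ) →L[ℝ] ℝ))))) κ := by
  have hC : (0:ℝ) < (n.choose k : ℝ) := by exact_mod_cast Nat.choose_pos hkn
  have hH : 0 < Hnorm n k κ := div_pos (esymm_pos n k hkn κ hκ) hC
  have h1 : HasFDerivAt (Hnorm n k)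
      (((n.choose k : ℝ))⁻¹ •
        (∑ s ∈ Finset.univ.powersetCard k, ∑ i ∈ s,
          (∏ j ∈ s.erase i, κ j) • (ContinuousLinearMap.proj i : ((Fin n → ℝ) →L[ℝ] ℝ)))) κ := by
    have : Hnorm n k = fun κ => esymm n k κ * ((n.choose k : ℝ))⁻¹ := by
      funext x; rw [Hnorm, div_eq_mul_inv]
    rw [this]
    exact (hasFDerivAt_esymm n k κ).mul_const _
  have h2 := h1.rpow_const (p := (1:ℝ)/k) (Or.inl hH.ne')
  exact h2

lemma Fd_eq (n k : ℕ) (hk1 : 1 ≤ k) (hkn : k ≤ n) (κ : Fin n → ℝ) (hκ : ∀ i, 0 < κ i)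
    (i : Fin n) :
    Fd n k κ i = (((1:ℝ)/k) * Hnorm n k κ ^ ((1:ℝ)/k - 1)) *
      (((n.choose k : ℝ))⁻¹ * esymmDel n i (k - 1) κ) := by
  rw [Fd, (hasFDerivAt_Fcurv n k hk1 hkn κ hκ).fderiv]
  simp only [ContinuousLinearMap.coe_smul', Pi.smul_apply, smul_eq_mul]
  rw [deriv_apply_single n k hk1 κ i]

lemma T_identity (n k : ℕ) (hk1 : 1 ≤ k) (κ : Fin n → ℝ) :
    ∑ i, esymmDel n i (k - 1) κ * κ i ^ 2
      = ∑ t ∈ Finset.univ.powersetCard k, (∏ j ∈ t, κ j) * (∑ i ∈ t, κ i) := by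
  classical
  unfold esymmDel
  simp_rw [Finset.sum_mul, Finset.mul_sum]
  rw [Finset.sum_sigma', Finset.sum_sigma']
  apply Finset.sum_nbij' (fun a => (⟨insert a.1 a.2, a.1⟩ : Σ t : Finset (Fin n), Fin n))
    (fun b => (⟨b.2, b.1.erase b.2⟩ : Σ i : Fin n, Finset (Fin n)))
  · rintro ⟨i, s⟩ hs
    simp only [Finset.mem_sigma, Finset.mem_univ, true_and, Finset.mem_powersetCard] at hs ⊢
    have his : i ∉ s := fun h => (Finset.mem_erase.mp (hs.1 h)).1 rfl
    refine ⟨⟨Finset.subset_univ _, ?_⟩, Finset.mem_insert_self i s⟩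
    rw [Finset.card_insert_of_notMem his, hs.2]
    omega
  · rintro ⟨t, i⟩ ht
    simp only [Finset.mem_sigma, Finset.mem_powersetCard, Finset.mem_univ, true_and] at ht ⊢
    refine ⟨Finset.erase_subset_erase i (Finset.subset_univ t), ?_⟩
    rw [Finset.card_erase_of_mem ht.2, ht.1.2]
  · rintro ⟨i, s⟩ hs
    simp only [Finset.mem_sigma, Finset.mem_univ, true_and, Finset.mem_powersetCard] at hs
    have his : i ∉ s := fun h => (Finset.mem_erase.mp (hs.1 h)).1 rfl
    simp [Finset.erase_insert his]
  · rintro ⟨t, i⟩ ht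
    simp only [Finset.mem_sigma, Finset.mem_powersetCard] at ht
    simp [Finset.insert_erase ht.2]
  · rintro ⟨i, s⟩ hs
    simp only [Finset.mem_sigma, Finset.mem_univ, true_and, Finset.mem_powersetCard] at hs
    have his : i ∉ s := fun h => (Finset.mem_erase.mp (hs.1 h)).1 rfl
    simp only
    rw [Finset.prod_insert his]
    ring

lemma amgm_step (n k : ℕ) (hk1 : 1 ≤ k) (κ : Fin n → ℝ) (hκ : ∀ i, 0 < κ i)
    (t : Finset (Fin n)) (ht : t.card = k) :
    (k : ℝ) * (∏ j ∈ t, κ j) ^ ((1:ℝ)/k) ≤ ∑ i ∈ t, κ i := by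
  have hk0 : (0:ℝ) < k := by exact_mod_cast hk1
  have h := Real.geom_mean_le_arith_mean_weighted t (fun _ => (1:ℝ)/k) κ
    (fun i _ => by positivity)
    (by rw [Finset.sum_const, ht, nsmul_eq_mul]; field_simp)
    (fun i _ => (hκ i).le)
  rw [Real.finset_prod_rpow t κ (fun i _ => (hκ i).le) ((1:ℝ)/k)] at h
  rw [← Finset.mul_sum] at h
  calc (k : ℝ) * (∏ j ∈ t, κ j) ^ ((1:ℝ)/k)
      ≤ (k : ℝ) * (1/(k:ℝ) * ∑ i ∈ t, κ i) := by
        apply mul_le_mul_of_nonneg_left h hk0.le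
    _ = ∑ i ∈ t, κ i := by field_simp

theorem stmt_7 (n k : ℕ) (hk1 : 1 ≤ k) (hkn : k ≤ n) (κ : Fin n → ℝ)
    (hκ : ∀ i, 0 < κ i) :
    ∑ i, Fd n k κ i * (κ i) ^ 2 ≥ (Fcurv n k κ) ^ 2 := by
  classical
  have hC : (0:ℝ) < (n.choose k : ℝ) := by exact_mod_cast Nat.choose_pos hkn
  have hk0 : (0:ℝ) < k := by exact_mod_cast hk1
  have hH : 0 < Hnorm n k κ := div_pos (esymm_pos n k hkn κ hκ) hC
  set p : ℝ := (1:ℝ)/k with hp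
  set c : ℝ := p * Hnorm n k κ ^ (p - 1) with hc
  have hcpos : 0 < c := by
    apply mul_pos (by positivity)
    exact Real.rpow_pos_of_pos hH _
  -- rewrite the sum using the derivative formula
  have h1 : ∑ i, Fd n k κ i * (κ i) ^ 2
      = c * ((n.choose k : ℝ))⁻¹ * ∑ i, esymmDel n i (k - 1) κ * κ i ^ 2 := by
    rw [Finset.mul_sum]
    apply Finset.sum_congr rfl
    intro i _
    rw [Fd_eq n k hk1 hkn κ hκ i]
    ring
  rw [h1, T_identity n k hk1 κ]
  -- cardinality of the index set
  have hcard : ((Finset.univ.powersetCard k : Finset (Finset (Fin n))).card : ℝ)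
      = (n.choose k : ℝ) := by
    rw [Finset.card_powersetCard, Finset.card_univ, Fintype.card_fin]
  -- Step 1: AM-GM per subset
  have step1 : ∑ t ∈ Finset.univ.powersetCard k, (∏ j ∈ t, κ j) * (∑ i ∈ t, κ i)
      ≥ (k:ℝ) * ∑ t ∈ Finset.univ.powersetCard k, (∏ j ∈ t, κ j) ^ (1 + p) := by
    rw [Finset.mul_sum]
    apply Finset.sum_le_sum
    intro t ht
    rw [Finset.mem_powersetCard] at ht
    have hw : 0 < ∏ j ∈ t, κ j := Finset.prod_pos fun i _ => hκ i
    have := amgm_step n k hk1 κ hκ t ht.2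
    calc (k:ℝ) * (∏ j ∈ t, κ j) ^ (1 + p)
        = (∏ j ∈ t, κ j) * ((k:ℝ) * (∏ j ∈ t, κ j) ^ p) := by
          rw [Real.rpow_add hw, Real.rpow_one]; ring
      _ ≤ (∏ j ∈ t, κ j) * (∑ i ∈ t, κ i) := by
          apply mul_le_mul_of_nonneg_left this hw.le
  -- Step 2: Jensen (convexity of x ^ (1+p))
  have step2 : ∑ t ∈ Finset.univ.powersetCard k, (∏ j ∈ t, κ j) ^ (1 + p)
      ≥ (n.choose k : ℝ) * Hnorm n k κ ^ (1 + p) := by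
    have hj := Real.rpow_arith_mean_le_arith_mean_rpow (Finset.univ.powersetCard k)
      (fun _ => ((n.choose k : ℝ))⁻¹) (fun t => ∏ j ∈ t, κ j)
      (fun t _ => by positivity)
      (by rw [Finset.sum_const, nsmul_eq_mul, hcard]; field_simp)
      (fun t _ => Finset.prod_nonneg fun i _ => (hκ i).le)
      (p := 1 + p) (le_add_of_nonneg_right (by positivity))
    rw [← Finset.mul_sum, ← Finset.mul_sum] at hj
    have hsum : ((n.choose k : ℝ))⁻¹ * ∑ t ∈ Finset.univ.powersetCard k, ∏ j ∈ t, κ j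
        = Hnorm n k κ := by
      rw [Hnorm, esymm, div_eq_mul_inv]; ring
    rw [hsum] at hj
    calc (n.choose k : ℝ) * Hnorm n k κ ^ (1 + p)
        ≤ (n.choose k : ℝ) * (((n.choose k : ℝ))⁻¹ *
            ∑ t ∈ Finset.univ.powersetCard k, (∏ j ∈ t, κ j) ^ (1 + p)) := by
          apply mul_le_mul_of_nonneg_left hj hC.le
      _ = ∑ t ∈ Finset.univ.powersetCard k, (∏ j ∈ t, κ j) ^ (1 + p) := by
          field_simp
  -- combine
  have key : ∑ t ∈ Finset.univ.powersetCard k, (∏ j ∈ t, κ j) * (∑ i ∈ t, κ i)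
      ≥ (k:ℝ) * ((n.choose k : ℝ) * Hnorm n k κ ^ (1 + p)) :=
    le_trans (mul_le_mul_of_nonneg_left step2 hk0.le) step1
  have hexp : Hnorm n k κ ^ (p - 1) * Hnorm n k κ ^ (1 + p) = Fcurv n k κ ^ 2 := by
    rw [← Real.rpow_add hH, Fcurv, sq, ← Real.rpow_add hH, ← hp]
    congr 1
    ring
  calc c * ((n.choose k : ℝ))⁻¹ *
        (∑ t ∈ Finset.univ.powersetCard k, (∏ j ∈ t, κ j) * (∑ i ∈ t, κ i))
      ≥ c * ((n.choose k : ℝ))⁻¹ *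
        ((k:ℝ) * ((n.choose k : ℝ) * Hnorm n k κ ^ (1 + p))) := by
        exact mul_le_mul_of_nonneg_left key (mul_nonneg hcpos.le (inv_nonneg.mpr hC.le))
    _ = (p * (k:ℝ)) * (((n.choose k : ℝ))⁻¹ * (n.choose k : ℝ)) *
        (Hnorm n k κ ^ (p - 1) * Hnorm n k κ ^ (1 + p)) := by
        rw [hc]; ring
    _ = (Fcurv n k κ) ^ 2 := by
        have hpk : p * (k:ℝ) = 1 := by rw [hp]; field_simp
        rw [hpk, inv_mul_cancel₀ hC.ne', one_mul, one_mul, hexp]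
end

section
/- The function F(κ) := H_k(κ)^{1/k} = (σ_k(κ)/C(n,k))^{1/k} is concave on the Gårding cone Γ_k ⊂ ℝ^n. -/
open Finset Real

set_option linter.unusedSectionVars false

section GardingAux

open Polynomial

variable {ι : Type*} [DecidableEq ι]

/-- elementary symmetric polynomial over an index Finset. -/
noncomputable def ES (s : Finset ι) (k : ℕ) (x : ι → ℝ) : ℝ :=
  ∑ t ∈ s.powersetCard k, ∏ i ∈ t, x i

lemma ES_zero (s : Finset ι) (x : ι → ℝ) : ES s 0 x = 1 := by
  simp [ES]

lemma ES_one (s : Finset ι) (x : ι → ℝ) : ES s 1 x = ∑ i ∈ s, x i := by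
  simp [ES, Finset.powersetCard_one, Finset.sum_map]

lemma ES_of_card_lt {s : Finset ι} {k : ℕ} (h : s.card < k) (x : ι → ℝ) : ES s k x = 0 := by
  rw [ES, Finset.powersetCard_eq_empty.2 h, Finset.sum_empty]

lemma ES_pos {s : Finset ι} {k : ℕ} {x : ι → ℝ} (hx : ∀ i ∈ s, 0 < x i) (hk : k ≤ s.card) :
    0 < ES s k x := by
  refine Finset.sum_pos (fun t ht => ?_) (Finset.powersetCard_nonempty.2 hk)
  rw [Finset.mem_powersetCard] at ht
  exact Finset.prod_pos fun i hi => hx i (ht.1 hi)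

lemma ES_coeff (s : Finset ι) (x : ι → ℝ) {m : ℕ} (hm : m ≤ s.card) :
    (∏ i ∈ s, (X + C (x i))).coeff (s.card - m) = ES s m x := by
  rw [Finset.prod_X_add_C_coeff s x (Nat.sub_le _ _), Nat.sub_sub_self hm, ES]

lemma ES_smul (s : Finset ι) (k : ℕ) (x : ι → ℝ) (c : ℝ) :
    ES s k (fun i => c * x i) = c ^ k * ES s k x := by
  rw [ES, ES, Finset.mul_sum]
  refine Finset.sum_congr rfl fun t ht => ?_
  rw [Finset.mem_powersetCard] at ht
  rw [Finset.prod_mul_distrib, Finset.prod_const, ht.2]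


/-! ### Real-rootedness machinery -/

lemma splits_derivative {p : ℝ[X]} (hp : p.Splits) :
    (derivative p).Splits := by
  rcases eq_or_ne p 0 with rfl | hp0
  · simp
  rcases le_or_gt p.natDegree 1 with h1 | h1
  · exact Splits.of_natDegree_le_one (le_trans (natDegree_derivative_le p) (by omega))
  have hd0 : derivative p ≠ 0 := by
    intro h
    have := p.natDegree_eq_zero_of_derivative_eq_zero h
    omega
  have hdeg : (derivative p).natDegree = p.natDegree - 1 := by
    refine le_antisymm (natDegree_derivative_le p) (le_natDegree_of_ne_zero ?_)
    rw [coeff_derivative, Nat.sub_add_cancel (by omega : 1 ≤ p.natDegree)]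
    have : p.coeff p.natDegree ≠ 0 := leadingCoeff_ne_zero.2 hp0
    exact mul_ne_zero this (by positivity)
  rw [splits_iff_card_roots]
  refine le_antisymm ((derivative p).card_roots' ) ?_
  have h2 := p.card_roots_le_derivative
  rw [splits_iff_card_roots.1 hp] at h2
  omega

lemma splits_iterate_derivative {p : ℝ[X]} (hp : p.Splits) (k : ℕ) :
    (derivative^[k] p).Splits := by
  induction k with
  | zero => exact hp
  | succ k ih => rw [Function.iterate_succ_apply']; exact splits_derivative ih

lemma splits_reverse {p : ℝ[X]} (hp : p.Splits) :
    p.reverse.Splits := by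
  rcases eq_or_ne p 0 with rfl | hp0
  · simp
  have := hp.eq_prod_roots
  rw [this]
  have : ∀ (m : Multiset ℝ), ((C p.leadingCoeff * (m.map fun a => X - C a).prod).reverse).Splits := by
    intro m
    induction m using Multiset.induction with
    | empty =>
      exact Splits.of_natDegree_le_one (le_trans (reverse_natDegree_le _) (by simp))
    | cons a m ih =>
      rw [Multiset.map_cons, Multiset.prod_cons, mul_comm (X - C a), ← mul_assoc,
        reverse_mul_of_domain]
      exact ih.mul (Splits.of_natDegree_le_one
        (le_trans (reverse_natDegree_le _) (by simp [natDegree_X_sub_C])))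
  exact this _

lemma newton_special {s : Finset ι} {j : ℕ} (hj : 1 ≤ j) (x : ι → ℝ)
    (h0 : ES s j x = 0) (h1 : 0 < ES s (j - 1) x) :
    ES s (j + 1) x ≤ 0 := by
  rcases lt_or_ge s.card (j + 1) with hc | hc
  · rw [ES_of_card_lt hc]
  by_cases hA : ES s (j + 1) x = 0
  · rw [hA]
  set d : ℕ := s.card - (j + 1) with hd
  set P : ℝ[X] := ∏ i ∈ s, (X + C (x i)) with hPdef
  have hPmonic : P.Monic := monic_prod_of_monic _ _ fun i _ => monic_X_add_C _
  have hPdeg : P.natDegree = s.card := by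
    rw [hPdef, natDegree_prod_of_monic _ _ fun i _ => monic_X_add_C _]
    simp [natDegree_X_add_C]
  have hPsplits : P.Splits :=
    Splits.prod fun i _ => Splits.of_natDegree_le_one (le_of_eq (natDegree_X_add_C _))
  have hPcoeff : ∀ b ≤ s.card, P.coeff b = ES s (s.card - b) x := by
    intro b hb
    have := ES_coeff s x (Nat.sub_le s.card b)
    rwa [Nat.sub_sub_self hb] at this
  set q : ℝ[X] := derivative^[d] P with hqdef
  have hqsplits : q.Splits := splits_iterate_derivative hPsplits d
  have hqcoeff : ∀ a, q.coeff a = ((a + d).descFactorial d : ℝ) * P.coeff (a + d) := by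
    intro a; rw [hqdef, coeff_iterate_derivative, nsmul_eq_mul]
  have hcard : s.card = j + 1 + d := by omega
  have hq0 : q.coeff 0 = (d.descFactorial d : ℝ) * ES s (j + 1) x := by
    rw [hqcoeff, zero_add, hPcoeff d (by omega)]; congr 2; omega
  have hq1 : q.coeff 1 = 0 := by
    rw [hqcoeff, hPcoeff (1 + d) (by omega)]
    have : s.card - (1 + d) = j := by omega
    rw [this, h0, mul_zero]
  have hq2 : q.coeff 2 = (((2 + d).descFactorial d : ℕ) : ℝ) * ES s (j - 1) x := by
    rw [hqcoeff, hPcoeff (2 + d) (by omega)]; congr 2; omega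
  have hqtop : q.coeff (j + 1) = ((s.card.descFactorial d : ℕ) : ℝ) := by
    rw [hqcoeff, hPcoeff (j + 1 + d) (by omega)]
    rw [show s.card - (j + 1 + d) = 0 by omega, ES_zero, mul_one, ← hcard]
  have hqhigh : ∀ b, j + 1 < b → q.coeff b = 0 := by
    intro b hb
    rw [hqcoeff]
    have : P.coeff (b + d) = 0 := coeff_eq_zero_of_natDegree_lt (by omega)
    rw [this, mul_zero]
  have dFpos : ∀ a b : ℕ, b ≤ a → (0:ℝ) < ((a.descFactorial b : ℕ) : ℝ) := by
    intro a b hab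
    have : a.descFactorial b ≠ 0 := fun h =>
      absurd (Nat.descFactorial_eq_zero_iff_lt.1 h) (by omega)
    exact_mod_cast Nat.pos_of_ne_zero this
  have hqtopne : q.coeff (j + 1) ≠ 0 := by
    rw [hqtop]; exact (dFpos _ _ (by omega)).ne'
  have hqdeg : q.natDegree = j + 1 := by
    refine le_antisymm (natDegree_le_iff_coeff_eq_zero.2 fun N hN => hqhigh N hN)
      (le_natDegree_of_ne_zero hqtopne)
  set r : ℝ[X] := q.reverse with hrdef
  have hrsplits : r.Splits := splits_reverse hqsplits
  have hrcoeff : ∀ b ≤ j + 1, r.coeff b = q.coeff (j + 1 - b) := by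
    intro b hb
    rw [hrdef, coeff_reverse, hqdeg, revAt_le hb]
  have hrdeg : r.natDegree ≤ j + 1 := le_trans (reverse_natDegree_le _) (le_of_eq hqdeg)
  set w : ℝ[X] := derivative^[j - 1] r with hwdef
  have hwsplits : w.Splits := splits_iterate_derivative hrsplits _
  have hwcoeff : ∀ a, w.coeff a = ((a + (j - 1)).descFactorial (j - 1) : ℝ) *
      r.coeff (a + (j - 1)) := by
    intro a; rw [hwdef, coeff_iterate_derivative, nsmul_eq_mul]
  have hw2 : w.coeff 2 = (((2 + (j - 1)).descFactorial (j - 1) : ℕ) : ℝ) *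
      ((d.descFactorial d : ℝ) * ES s (j + 1) x) := by
    rw [hwcoeff, ← hq0, hrcoeff (2 + (j - 1)) (by omega), show j + 1 - (2 + (j - 1)) = 0 by omega]
  have hw1 : w.coeff 1 = 0 := by
    rw [hwcoeff, hrcoeff (1 + (j - 1)) (by omega), show j + 1 - (1 + (j - 1)) = 1 by omega, hq1,
      mul_zero]
  have hw0 : w.coeff 0 = (((j - 1).descFactorial (j - 1) : ℕ) : ℝ) *
      ((((2 + d).descFactorial d : ℕ) : ℝ) * ES s (j - 1) x) := by
    rw [hwcoeff, hrcoeff (0 + (j - 1)) (by omega), show j + 1 - (0 + (j - 1)) = 2 by omega, hq2,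
      zero_add]
  have hwhigh : ∀ a, 2 < a → w.coeff a = 0 := by
    intro a ha
    rw [hwcoeff]
    have : r.coeff (a + (j - 1)) = 0 := coeff_eq_zero_of_natDegree_lt (by omega)
    rw [this, mul_zero]
  have hw2ne : w.coeff 2 ≠ 0 := by
    rw [hw2]
    refine mul_ne_zero ?_ (mul_ne_zero ?_ hA)
    · exact (dFpos _ _ (by omega)).ne'
    · exact (dFpos _ _ (le_refl _)).ne'
  have hwne : w ≠ 0 := fun h => hw2ne (by rw [h, coeff_zero])
  have hwdeg : w.natDegree = 2 :=
    le_antisymm (natDegree_le_iff_coeff_eq_zero.2 fun N hN => hwhigh N hN)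
      (le_natDegree_of_ne_zero hw2ne)
  -- extract a real root
  obtain ⟨ρ, hρ⟩ : ∃ ρ, ρ ∈ w.roots := by
    refine Multiset.card_pos_iff_exists_mem.1 ?_
    rw [splits_iff_card_roots.1 hwsplits, hwdeg]; omega
  have hρroot : w.eval ρ = 0 := (isRoot_of_mem_roots hρ).eq_zero
  have heval : w.coeff 2 * (ρ * ρ) + w.coeff 1 * ρ + w.coeff 0 = 0 := by
    rw [eval_eq_sum_range' (by omega : w.natDegree < 3)] at hρroot
    rw [Finset.sum_range_succ, Finset.sum_range_succ, Finset.sum_range_one] at hρroot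
    ring_nf at hρroot ⊢
    linarith [hρroot]
  have hdisc : discrim (w.coeff 2) (w.coeff 1) (w.coeff 0) = (2 * w.coeff 2 * ρ + w.coeff 1) ^ 2 :=
    (quadratic_eq_zero_iff_discrim_eq_sq hw2ne ρ).1 heval
  have hdisc' : 0 ≤ w.coeff 1 ^ 2 - 4 * (w.coeff 2) * (w.coeff 0) := by
    rw [show w.coeff 1 ^ 2 - 4 * w.coeff 2 * w.coeff 0 =
      discrim (w.coeff 2) (w.coeff 1) (w.coeff 0) from rfl, hdisc]
    positivity
  rw [hw1] at hdisc'
  have hprod : w.coeff 2 * w.coeff 0 ≤ 0 := by nlinarith [hdisc']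
  rw [hw2, hw0] at hprod
  by_contra hpos
  push_neg at hpos
  have h2 : 0 < ES s (j + 1) x := hpos
  have c1 := dFpos (2 + (j - 1)) (j - 1) (by omega)
  have c2 := dFpos d d (le_refl _)
  have c3 := dFpos (j - 1) (j - 1) (le_refl _)
  have c4 := dFpos (2 + d) d (by omega)
  nlinarith [mul_pos (mul_pos c1 (mul_pos c2 h2)) (mul_pos c3 (mul_pos c4 h1))]

lemma ES_shift (s : Finset ι) (x : ι → ℝ) {m : ℕ} (hm : m ≤ s.card) (t : ℝ) :
    ES s m (fun i => x i + t) =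
      ∑ a ∈ Finset.range (m + 1),
        (((a + (s.card - m)).choose (s.card - m) : ℕ) : ℝ) * ES s (m - a) x * t ^ a := by
  set d : ℕ := s.card - m with hd
  have key : ES s m (fun i => x i + t) = (Polynomial.hasseDeriv d (∏ i ∈ s, (X + C (x i)))).eval t := by
    rw [← ES_coeff s (fun i => x i + t) hm]
    have : (∏ i ∈ s, (X + C (x i + t))) = Polynomial.taylor t (∏ i ∈ s, (X + C (x i))) := by
      rw [taylor_apply, Polynomial.prod_comp]
      refine Finset.prod_congr rfl fun i _ => ?_
      rw [add_comp, X_comp, C_comp, C_add]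
      ring
    rw [this, taylor_coeff]
  rw [key]
  have hdeg : (Polynomial.hasseDeriv d (∏ i ∈ s, (X + C (x i)))).natDegree < m + 1 := by
    refine lt_of_le_of_lt (le_trans (natDegree_hasseDeriv_le _ _) ?_) (Nat.lt_succ_self m)
    have : (∏ i ∈ s, (X + C (x i))).natDegree = s.card := by
      rw [natDegree_prod_of_monic _ _ fun i _ => monic_X_add_C _]
      simp [natDegree_X_add_C]
    omega
  rw [eval_eq_sum_range' hdeg]
  refine Finset.sum_congr rfl fun a ha => ?_
  rw [Finset.mem_range] at ha
  rw [hasseDeriv_coeff]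
  congr 1
  have hPc : (∏ i ∈ s, (X + C (x i))).coeff (a + d) = ES s (s.card - (a + d)) x := by
    have := ES_coeff s x (m := s.card - (a + d)) (Nat.sub_le _ _)
    rwa [Nat.sub_sub_self (by omega)] at this
  rw [hPc, show s.card - (a + d) = m - a by omega]

/-- The Gårding cone relative to a finite index set. -/
def Gam (s : Finset ι) (k : ℕ) (x : ι → ℝ) : Prop :=
  ∀ j, 1 ≤ j → j ≤ k → 0 < ES s j x

lemma Gam.mono {s : Finset ι} {k k' : ℕ} {x : ι → ℝ} (h : Gam s k x) (hk : k' ≤ k) :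
    Gam s k' x := fun j h1 h2 => h j h1 (le_trans h2 hk)

lemma Gam_shift {s : Finset ι} {k : ℕ} {x : ι → ℝ} (hk : k ≤ s.card) (hx : Gam s k x)
    {t : ℝ} (ht : 0 ≤ t) : Gam s k (fun i => x i + t) := by
  intro j h1 h2
  rw [ES_shift s x (le_trans h2 hk) t]
  have hterm : ∀ a ∈ Finset.range (j + 1),
      0 ≤ (((a + (s.card - j)).choose (s.card - j) : ℕ) : ℝ) * ES s (j - a) x * t ^ a := by
    intro a ha
    rw [Finset.mem_range] at ha
    rcases Nat.eq_or_lt_of_le (Nat.le_of_lt_succ ha) with rfl | hlt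
    · rw [Nat.sub_self, ES_zero]
      positivity
    · have h3 : 0 < ES s (j - a) x := hx (j - a) (by omega) (by omega)
      have : (0:ℝ) ≤ (((a + (s.card - j)).choose (s.card - j) : ℕ) : ℝ) := by positivity
      have := pow_nonneg ht a
      positivity
  refine Finset.sum_pos' hterm ⟨0, Finset.mem_range.2 (by omega), ?_⟩
  simp only [pow_zero, mul_one, Nat.sub_zero, zero_add]
  have hchoose : 0 < (((s.card - j).choose (s.card - j) : ℕ) : ℝ) := by
    rw [Nat.choose_self]; norm_num
  exact mul_pos hchoose (hx j h1 h2)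

lemma ES_insert {u : Finset ι} {i : ι} (hi : i ∉ u) (k : ℕ) (x : ι → ℝ) :
    ES (insert i u) (k + 1) x = ES u (k + 1) x + x i * ES u k x := by
  rw [ES, Finset.powersetCard_succ_insert hi, Finset.sum_union]
  · congr 1
    rw [Finset.sum_image (fun t ht v hv htv => ?_), ES, Finset.mul_sum]
    · refine Finset.sum_congr rfl fun t ht => ?_
      rw [Finset.mem_powersetCard] at ht
      rw [Finset.prod_insert fun hmem => hi (ht.1 hmem)]
    · have hit : i ∉ t := fun hm => hi ((Finset.mem_powersetCard.1 ht).1 hm)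
      have hiv : i ∉ v := fun hm => hi ((Finset.mem_powersetCard.1 hv).1 hm)
      rw [← Finset.erase_insert hit, ← Finset.erase_insert hiv, htv]
  · rw [Finset.disjoint_left]
    rintro t ht1 ht2
    rw [Finset.mem_powersetCard] at ht1
    obtain ⟨v, hv, rfl⟩ := Finset.mem_image.1 ht2
    exact hi (ht1.1 (Finset.mem_insert_self i v))

lemma ES_erase {s : Finset ι} {i : ι} (hi : i ∈ s) (k : ℕ) (x : ι → ℝ) :
    ES s (k + 1) x = ES (s.erase i) (k + 1) x + x i * ES (s.erase i) k x := by
  conv_lhs => rw [← Finset.insert_erase hi]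
  exact ES_insert (Finset.notMem_erase i s) k x

lemma ES_sum_mul_erase (s : Finset ι) (k : ℕ) (x : ι → ℝ) :
    ∑ i ∈ s, x i * ES (s.erase i) k x = (k + 1 : ℝ) * ES s (k + 1) x := by
  have lhs_eq : ∑ i ∈ s, x i * ES (s.erase i) k x =
      ∑ i ∈ s, ∑ t ∈ (s.erase i).powersetCard k, ∏ l ∈ insert i t, x l := by
    refine Finset.sum_congr rfl fun i hi => ?_
    rw [ES, Finset.mul_sum]
    refine Finset.sum_congr rfl fun t ht => ?_
    rw [Finset.mem_powersetCard] at ht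
    rw [Finset.prod_insert fun hmem => (Finset.notMem_erase i s) (ht.1 hmem)]
  rw [lhs_eq]
  rw [show ∑ i ∈ s, ∑ t ∈ (s.erase i).powersetCard k, ∏ l ∈ insert i t, x l =
      ∑ u ∈ s.powersetCard (k + 1), ∑ _i ∈ u, ∏ l ∈ u, x l from ?_]
  · rw [ES, Finset.mul_sum]
    refine Finset.sum_congr rfl fun u hu => ?_
    rw [Finset.mem_powersetCard] at hu
    rw [Finset.sum_const, hu.2, nsmul_eq_mul]
    push_cast
    ring
  · rw [Finset.sum_sigma', Finset.sum_sigma']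
    refine Finset.sum_nbij' (i := fun p => (⟨insert p.1 p.2, p.1⟩ : Σ _u : Finset ι, ι))
      (j := fun p => (⟨p.2, p.1.erase p.2⟩ : Σ _i : ι, Finset ι)) ?_ ?_ ?_ ?_ ?_
    · rintro ⟨i, t⟩ hp
      rw [Finset.mem_sigma] at hp ⊢
      obtain ⟨hi, ht⟩ := hp
      rw [Finset.mem_powersetCard] at ht
      have hit : i ∉ t := fun hm => (Finset.notMem_erase i s) (ht.1 hm)
      refine ⟨Finset.mem_powersetCard.2 ⟨?_, ?_⟩, Finset.mem_insert_self i t⟩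
      · intro l hl
        rcases Finset.mem_insert.1 hl with rfl | hl
        · exact hi
        · exact Finset.mem_of_mem_erase (ht.1 hl)
      · rw [Finset.card_insert_of_notMem hit, ht.2]
    · rintro ⟨u, i⟩ hp
      rw [Finset.mem_sigma] at hp ⊢
      obtain ⟨hu, hi⟩ := hp
      rw [Finset.mem_powersetCard] at hu
      refine ⟨hu.1 hi, Finset.mem_powersetCard.2 ⟨?_, ?_⟩⟩
      · intro l hl
        exact Finset.mem_erase.2 ⟨(Finset.mem_erase.1 hl).1, hu.1 (Finset.mem_of_mem_erase hl)⟩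
      · rw [Finset.card_erase_of_mem hi, hu.2]; omega
    · rintro ⟨i, t⟩ hp
      rw [Finset.mem_sigma] at hp
      obtain ⟨hi, ht⟩ := hp
      rw [Finset.mem_powersetCard] at ht
      have hit : i ∉ t := fun hm => (Finset.notMem_erase i s) (ht.1 hm)
      simp only [Finset.erase_insert hit]
    · rintro ⟨u, i⟩ hp
      rw [Finset.mem_sigma] at hp
      simp only [Finset.insert_erase hp.2]
    · rintro ⟨i, t⟩ hp
      rfl

lemma ES_continuous (u : Finset ι) (j : ℕ) (x : ι → ℝ) :
    Continuous (fun t : ℝ => ES u j (fun l => x l + t)) := by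
  refine continuous_finset_sum _ fun t _ => continuous_finset_prod _ fun l _ => ?_
  exact continuous_const.add continuous_id

lemma Gam_erase {s : Finset ι} {k : ℕ} (hk : k ≤ s.card) {i : ι} (hi : i ∈ s) :
    ∀ j, j + 1 ≤ k → ∀ x : ι → ℝ, Gam s k x → 0 < ES (s.erase i) j x := by
  intro j
  induction j with
  | zero => intro _ x _; rw [ES_zero]; norm_num
  | succ m ih =>
    intro hjk x hx
    by_contra hneg
    push_neg at hneg
    set φ : ℝ → ℝ := fun t => ES (s.erase i) (m + 1) (fun l => x l + t) with hφdef
    have hφcont : Continuous φ := ES_continuous _ _ _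
    set T : ℝ := 1 + ∑ l ∈ s, |x l| with hT
    have hT0 : (0:ℝ) ≤ T := by
      have : (0:ℝ) ≤ ∑ l ∈ s, |x l| := Finset.sum_nonneg fun l _ => abs_nonneg _
      simp [hT]; linarith
    have hφT : 0 < φ T := by
      refine ES_pos (fun l hl => ?_) (by
        have := Finset.card_erase_of_mem hi
        omega)
      have hls : l ∈ s := Finset.mem_of_mem_erase hl
      have h1 : |x l| ≤ ∑ l ∈ s, |x l| :=
        Finset.single_le_sum (fun l _ => abs_nonneg (x l)) hls
      have h2 : -x l ≤ |x l| := neg_le_abs _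
      simp only [hT]
      linarith
    have hφ0 : φ 0 ≤ 0 := by
      have : (fun l => x l + (0:ℝ)) = x := by funext l; ring
      simpa [hφdef, this] using hneg
    obtain ⟨t0, ht0mem, ht0⟩ : ∃ t0 ∈ Set.Icc (0:ℝ) T, φ t0 = 0 := by
      have := intermediate_value_Icc hT0 hφcont.continuousOn
      have h0mem : (0:ℝ) ∈ Set.Icc (φ 0) (φ T) := ⟨hφ0, le_of_lt hφT⟩
      obtain ⟨t0, ht0mem, ht0⟩ := this h0mem
      exact ⟨t0, ht0mem, ht0⟩
    set x' : ι → ℝ := fun l => x l + t0 with hx'def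
    have hx' : Gam s k x' := Gam_shift hk hx ht0mem.1
    have h1' : 0 < ES (s.erase i) m x' := ih (by omega) x' hx'
    have hES0 : ES (s.erase i) (m + 1) x' = 0 := ht0
    have hnewton : ES (s.erase i) (m + 2) x' ≤ 0 := by
      have := newton_special (s := s.erase i) (j := m + 1) (by omega) x' hES0
        (by simpa using h1')
      simpa using this
    have hdecomp : ES s (m + 2) x' =
        ES (s.erase i) (m + 2) x' + x' i * ES (s.erase i) (m + 1) x' := ES_erase hi (m + 1) x'
    have hcontra : ES s (m + 2) x' ≤ 0 := by
      rw [hdecomp, hES0, mul_zero, add_zero]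
      exact hnewton
    exact absurd (hx' (m + 2) (by omega) (by omega)) (not_lt.2 hcontra)

lemma Gam_del {s : Finset ι} {k : ℕ} (hk : k ≤ s.card) {i : ι} (hi : i ∈ s)
    {x : ι → ℝ} (hx : Gam s k x) : Gam (s.erase i) (k - 1) x :=
  fun j h1 h2 => Gam_erase hk hi j (by omega) x hx

lemma cauchy_aux {u1 u2 p q P : ℝ} (hp : 0 < p) (hq : 0 < q) (hP : p + q ≤ P) :
    (u1 + u2) ^ 2 / P ≤ u1 ^ 2 / p + u2 ^ 2 / q := by
  have hpq : (0:ℝ) < p + q := by linarith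
  have hP0 : (0:ℝ) < P := lt_of_lt_of_le hpq hP
  have h1 : (u1 + u2) ^ 2 / P ≤ (u1 + u2) ^ 2 / (p + q) := by
    gcongr
  have h2 : (u1 + u2) ^ 2 / (p + q) ≤ u1 ^ 2 / p + u2 ^ 2 / q := by
    rw [div_add_div _ _ (ne_of_gt hp) (ne_of_gt hq), div_le_div_iff₀ hpq (by positivity)]
    nlinarith [sq_nonneg (u1 * q - u2 * p)]
  linarith

lemma ES_identityB (s : Finset ι) (m : ℕ) (w : ι → ℝ) :
    ((m : ℝ) + 2) * ES s (m + 2) w =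
      (∑ i ∈ s, w i) * ES s (m + 1) w - ∑ i ∈ s, (w i) ^ 2 * ES (s.erase i) m w := by
  have h := ES_sum_mul_erase s (m + 1) w
  have h2 : ∀ i ∈ s, w i * ES (s.erase i) (m + 1) w =
      w i * ES s (m + 1) w - (w i) ^ 2 * ES (s.erase i) m w := by
    intro i hi
    rw [ES_erase hi m w]
    ring
  rw [Finset.sum_congr rfl h2, Finset.sum_sub_distrib, ← Finset.sum_mul] at h
  have h' : (((m:ℝ) + 1) + 1) * ES s (m + 1 + 1) w =
      (∑ i ∈ s, w i) * ES s (m + 1) w - ∑ i ∈ s, (w i) ^ 2 * ES (s.erase i) m w := by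
    push_cast at h; linarith
  calc ((m : ℝ) + 2) * ES s (m + 2) w = (((m:ℝ) + 1) + 1) * ES s (m + 1 + 1) w := by ring_nf
    _ = _ := h'

theorem ML_superadd : ∀ k : ℕ, 1 ≤ k → ∀ (s : Finset ι) (x y : ι → ℝ), k ≤ s.card →
    Gam s k x → Gam s k y →
    Gam s k (fun i => x i + y i) ∧
      ES s k x / ES s (k - 1) x + ES s k y / ES s (k - 1) y ≤
        ES s k (fun i => x i + y i) / ES s (k - 1) (fun i => x i + y i) := by
  intro k
  induction k with
  | zero => omega
  | succ K IH =>
    rcases Nat.eq_zero_or_pos K with rfl | hK1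
    · -- base case k = 1
      intro _ s x y hk hx hy
      have hadd : ES s 1 (fun i => x i + y i) = ES s 1 x + ES s 1 y := by
        rw [ES_one, ES_one, ES_one, ← Finset.sum_add_distrib]
      constructor
      · intro j h1 h2
        have : j = 1 := by omega
        subst this
        rw [hadd]
        exact add_pos (hx 1 le_rfl le_rfl) (hy 1 le_rfl le_rfl)
      · simp only [Nat.sub_self, ES_zero, div_one, hadd, le_refl]
    · -- inductive step, k = K + 1 with K ≥ 1; write K = m + 1
      obtain ⟨m, rfl⟩ : ∃ m, K = m + 1 := ⟨K - 1, by omega⟩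
      intro _ s x y hk hx hy
      set z : ι → ℝ := fun i => x i + y i with hzdef
      have hxK : Gam s (m + 1) x := hx.mono (by omega)
      have hyK : Gam s (m + 1) y := hy.mono (by omega)
      obtain ⟨hzK, _⟩ := IH (by omega) s x y (by omega) hxK hyK
      have ESKx : 0 < ES s (m + 1) x := hxK (m + 1) (by omega) le_rfl
      have ESKy : 0 < ES s (m + 1) y := hyK (m + 1) (by omega) le_rfl
      have ESKz : 0 < ES s (m + 1) z := hzK (m + 1) (by omega) le_rfl
      -- per-index inequality
      have claim : ∀ i ∈ s,
          (z i) ^ 2 * ES (s.erase i) m z / ES s (m + 1) z ≤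
            (x i) ^ 2 * ES (s.erase i) m x / ES s (m + 1) x +
            (y i) ^ 2 * ES (s.erase i) m y / ES s (m + 1) y := by
        intro i hi
        have hax : 0 < ES (s.erase i) m x := Gam_erase hk hi m (by omega) x hx
        have hay : 0 < ES (s.erase i) m y := Gam_erase hk hi m (by omega) y hy
        have haz : 0 < ES (s.erase i) m z :=
          Gam_erase (k := m + 1) (by omega) hi m (by omega) z hzK
        have hbx : 0 < ES (s.erase i) (m + 1) x := Gam_erase hk hi (m + 1) (by omega) x hx
        have hby : 0 < ES (s.erase i) (m + 1) y := Gam_erase hk hi (m + 1) (by omega) y hy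
        -- induction hypothesis on the erased set
        have hxe : Gam (s.erase i) (m + 1) x := by
          have := Gam_del hk hi hx
          simpa using this
        have hye : Gam (s.erase i) (m + 1) y := by
          have := Gam_del hk hi hy
          simpa using this
        have hcard_e : m + 1 ≤ (s.erase i).card := by
          rw [Finset.card_erase_of_mem hi]; omega
        obtain ⟨_, hIHe⟩ := IH (by omega) (s.erase i) x y hcard_e hxe hye
        simp only [Nat.add_sub_cancel] at hIHe
        -- decompositions
        have hdx : ES s (m + 1) x = ES (s.erase i) (m + 1) x + x i * ES (s.erase i) m x :=
          ES_erase hi m x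
        have hdy : ES s (m + 1) y = ES (s.erase i) (m + 1) y + y i * ES (s.erase i) m y :=
          ES_erase hi m y
        have hdz : ES s (m + 1) z = ES (s.erase i) (m + 1) z + z i * ES (s.erase i) m z :=
          ES_erase hi m z
        set p : ℝ := ES s (m + 1) x / ES (s.erase i) m x with hpdef
        set q : ℝ := ES s (m + 1) y / ES (s.erase i) m y with hqdef
        have hp : 0 < p := div_pos ESKx hax
        have hq : 0 < q := div_pos ESKy hay
        have hPz : p + q ≤ ES s (m + 1) z / ES (s.erase i) m z := by
          rw [hpdef, hqdef, hdx, hdy, hdz]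
          rw [add_div, add_div, add_div]
          rw [mul_div_assoc, mul_div_assoc, mul_div_assoc,
            div_self (ne_of_gt hax), div_self (ne_of_gt hay), div_self (ne_of_gt haz)]
          have : z i = x i + y i := rfl
          rw [this]
          have h2 : ES (s.erase i) (m + 1) x / ES (s.erase i) m x +
              ES (s.erase i) (m + 1) y / ES (s.erase i) m y ≤
              ES (s.erase i) (m + 1) z / ES (s.erase i) m z := hIHe
          linarith
        have key : (z i) ^ 2 * ES (s.erase i) m z / ES s (m + 1) z =
            (z i) ^ 2 / (ES s (m + 1) z / ES (s.erase i) m z) := by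
          rw [div_div_eq_mul_div]
        rw [key]
        have hc : (z i) ^ 2 / (ES s (m + 1) z / ES (s.erase i) m z) ≤
            (x i) ^ 2 / p + (y i) ^ 2 / q := by
          have := cauchy_aux (u1 := x i) (u2 := y i) hp hq hPz
          simpa [hzdef] using this
        refine le_trans hc (le_of_eq ?_)
        rw [hpdef, hqdef]
        rw [div_div_eq_mul_div, div_div_eq_mul_div]
      -- sum the claims
      have hsum : ∑ i ∈ s, (z i) ^ 2 * ES (s.erase i) m z / ES s (m + 1) z ≤
          (∑ i ∈ s, (x i) ^ 2 * ES (s.erase i) m x / ES s (m + 1) x) +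
          ∑ i ∈ s, (y i) ^ 2 * ES (s.erase i) m y / ES s (m + 1) y := by
        rw [← Finset.sum_add_distrib]
        exact Finset.sum_le_sum claim
      -- representation of the quotient
      have rep : ∀ w : ι → ℝ, 0 < ES s (m + 1) w →
          ES s (m + 2) w / ES s (m + 1) w =
            ((∑ i ∈ s, w i) - ∑ i ∈ s, (w i) ^ 2 * ES (s.erase i) m w / ES s (m + 1) w) /
              ((m : ℝ) + 2) := by
        intro w hw
        have hB := ES_identityB s m w
        have hw' : ES s (m + 1) w ≠ 0 := ne_of_gt hw
        rw [← Finset.sum_div]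
        have h1 : (∑ i ∈ s, w i) - (∑ i ∈ s, (w i) ^ 2 * ES (s.erase i) m w) / ES s (m + 1) w =
            ((m : ℝ) + 2) * ES s (m + 2) w / ES s (m + 1) w := by
          rw [eq_div_iff hw', sub_mul, div_mul_cancel₀ _ hw', hB]
        rw [h1, mul_div_assoc, mul_div_cancel_left₀ _
          (by positivity : ((m : ℝ) + 2) ≠ 0)]
      have hq_ineq : ES s (m + 2) x / ES s (m + 1) x + ES s (m + 2) y / ES s (m + 1) y ≤
          ES s (m + 2) z / ES s (m + 1) z := by
        rw [rep x ESKx, rep y ESKy, rep z ESKz, ← add_div,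
          div_le_div_iff_of_pos_right (by positivity : (0:ℝ) < (m : ℝ) + 2)]
        have hzsum : ∑ i ∈ s, z i = ∑ i ∈ s, x i + ∑ i ∈ s, y i := by
          rw [← Finset.sum_add_distrib]
        linarith [hsum]
      have hz_top : 0 < ES s (m + 2) z := by
        have hfx : 0 < ES s (m + 2) x / ES s (m + 1) x :=
          div_pos (hx (m + 2) (by omega) le_rfl) ESKx
        have hfy : 0 < ES s (m + 2) y / ES s (m + 1) y :=
          div_pos (hy (m + 2) (by omega) le_rfl) ESKy
        have hzq : 0 < ES s (m + 2) z / ES s (m + 1) z := lt_of_lt_of_le (by linarith) hq_ineq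
        have := mul_pos hzq ESKz
        rwa [div_mul_cancel₀ _ (ne_of_gt ESKz)] at this
      refine ⟨fun j h1 h2 => ?_, ?_⟩
      · rcases eq_or_lt_of_le h2 with rfl | hlt
        · exact hz_top
        · exact hzK j h1 (by omega)
      · simpa using hq_ineq

lemma mahler_aux {k : ℕ} (hk : 1 ≤ k) (a b : ℕ → ℝ)
    (ha : ∀ j ∈ Finset.range k, 0 < a j) (hb : ∀ j ∈ Finset.range k, 0 < b j) :
    (∏ j ∈ Finset.range k, a j) ^ ((1:ℝ)/k) + (∏ j ∈ Finset.range k, b j) ^ ((1:ℝ)/k) ≤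
      (∏ j ∈ Finset.range k, (a j + b j)) ^ ((1:ℝ)/k) := by
  set s := Finset.range k
  have hab : ∀ j ∈ s, 0 < a j + b j := fun j hj => add_pos (ha j hj) (hb j hj)
  have hA : 0 < ∏ j ∈ s, a j := Finset.prod_pos ha
  have hB : 0 < ∏ j ∈ s, b j := Finset.prod_pos hb
  have hC : 0 < ∏ j ∈ s, (a j + b j) := Finset.prod_pos hab
  have hw : ∀ j ∈ s, (0:ℝ) ≤ 1/k := fun j _ => by positivity
  have hw' : ∑ _j ∈ s, (1:ℝ)/k = 1 := by
    rw [Finset.sum_const, Finset.card_range, nsmul_eq_mul]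
    field_simp
  have key : ∀ c : ℕ → ℝ, (∀ j ∈ s, 0 < c j) →
      (∏ j ∈ s, c j) ^ ((1:ℝ)/k) / (∏ j ∈ s, (a j + b j)) ^ ((1:ℝ)/k) ≤
        ∑ j ∈ s, (1/k) * (c j / (a j + b j)) := by
    intro c hc
    have := Real.geom_mean_le_arith_mean_weighted s (fun _ => 1/k)
      (fun j => c j / (a j + b j)) hw hw'
      (fun j hj => le_of_lt (div_pos (hc j hj) (hab j hj)))
    calc (∏ j ∈ s, c j) ^ ((1:ℝ)/k) / (∏ j ∈ s, (a j + b j)) ^ ((1:ℝ)/k)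
        = ∏ j ∈ s, (c j / (a j + b j)) ^ ((1:ℝ)/k) := by
          rw [Real.finset_prod_rpow s _ (fun j hj => le_of_lt
            (div_pos (hc j hj) (hab j hj))) _, Finset.prod_div_distrib,
            Real.div_rpow (le_of_lt (Finset.prod_pos hc)) (le_of_lt hC)]
      _ ≤ _ := this
  have hsum : ∑ j ∈ s, (1/k) * (a j / (a j + b j)) + ∑ j ∈ s, (1/k) * (b j / (a j + b j)) = 1 := by
    rw [← Finset.sum_add_distrib]
    have heach : ∀ j ∈ s, (1/(k:ℝ)) * (a j / (a j + b j)) + (1/(k:ℝ)) * (b j / (a j + b j)) =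
        1/(k:ℝ) := by
      intro j hj
      rw [← mul_add, ← add_div, div_self (ne_of_gt (hab j hj)), mul_one]
    rw [Finset.sum_congr rfl heach, hw']
  have h1 := key a ha
  have h2 := key b hb
  have hCr : 0 < (∏ j ∈ s, (a j + b j)) ^ ((1:ℝ)/k) := Real.rpow_pos_of_pos hC _
  have : (∏ j ∈ s, a j) ^ ((1:ℝ)/k) / (∏ j ∈ s, (a j + b j)) ^ ((1:ℝ)/k) +
      (∏ j ∈ s, b j) ^ ((1:ℝ)/k) / (∏ j ∈ s, (a j + b j)) ^ ((1:ℝ)/k) ≤ 1 := by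
    calc _ ≤ ∑ j ∈ s, (1/(k:ℝ)) * (a j / (a j + b j)) +
        ∑ j ∈ s, (1/(k:ℝ)) * (b j / (a j + b j)) := add_le_add h1 h2
      _ = 1 := hsum
  calc (∏ j ∈ s, a j) ^ ((1:ℝ)/k) + (∏ j ∈ s, b j) ^ ((1:ℝ)/k)
      = ((∏ j ∈ s, a j) ^ ((1:ℝ)/k) / (∏ j ∈ s, (a j + b j)) ^ ((1:ℝ)/k) +
        (∏ j ∈ s, b j) ^ ((1:ℝ)/k) / (∏ j ∈ s, (a j + b j)) ^ ((1:ℝ)/k)) *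
          (∏ j ∈ s, (a j + b j)) ^ ((1:ℝ)/k) := by
        field_simp
    _ ≤ 1 * (∏ j ∈ s, (a j + b j)) ^ ((1:ℝ)/k) := by
        exact mul_le_mul_of_nonneg_right this (le_of_lt hCr)
    _ = _ := one_mul _

lemma Gam_smul {s : Finset ι} {k : ℕ} {x : ι → ℝ} {c : ℝ} (hc : 0 < c) (hx : Gam s k x) :
    Gam s k (fun i => c * x i) := by
  intro j h1 h2
  rw [ES_smul]
  exact mul_pos (pow_pos hc j) (hx j h1 h2)

end GardingAux

/-- The Gårding cone Γ_k. -/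
def GardingCone (n k : ℕ) : Set (Fin n → ℝ) :=
  {κ | ∀ j, 1 ≤ j → j ≤ k → 0 < Hnorm n j κ}

lemma Hnorm_eq (n j : ℕ) (κ : Fin n → ℝ) :
    Hnorm n j κ = ES Finset.univ j κ / (n.choose j) := rfl

lemma Hnorm_zero (n : ℕ) (κ : Fin n → ℝ) : Hnorm n 0 κ = 1 := by
  rw [Hnorm_eq, ES_zero, Nat.choose_zero_right, Nat.cast_one, div_one]

lemma Hnorm_pos_iff {n j : ℕ} (hj : j ≤ n) (κ : Fin n → ℝ) :
    0 < Hnorm n j κ ↔ 0 < ES (Finset.univ : Finset (Fin n)) j κ := by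
  rw [Hnorm_eq]
  have hc : (0:ℝ) < (n.choose j : ℕ) := by exact_mod_cast Nat.choose_pos hj
  constructor
  · intro h
    have := mul_pos h hc
    rwa [div_mul_cancel₀ _ (ne_of_gt hc)] at this
  · intro h
    exact div_pos h hc

lemma mem_GardingCone_iff {n k : ℕ} (hkn : k ≤ n) {κ : Fin n → ℝ} :
    κ ∈ GardingCone n k ↔ Gam (Finset.univ : Finset (Fin n)) k κ := by
  constructor <;> intro h j h1 h2
  · exact (Hnorm_pos_iff (le_trans h2 hkn) κ).1 (h j h1 h2)
  · exact (Hnorm_pos_iff (le_trans h2 hkn) κ).2 (h j h1 h2)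

lemma Hnorm_pos_of_Gam {n k j : ℕ} (hj : j ≤ k) (hkn : k ≤ n) {κ : Fin n → ℝ}
    (h : Gam (Finset.univ : Finset (Fin n)) k κ) : 0 < Hnorm n j κ := by
  rcases Nat.eq_zero_or_pos j with rfl | hj1
  · rw [Hnorm_zero]; norm_num
  · exact (Hnorm_pos_iff (le_trans hj hkn) κ).2 (h j hj1 hj)

lemma Hnorm_telescope {n : ℕ} (w : Fin n → ℝ) :
    ∀ k : ℕ, (∀ j, j ≤ k → 0 < Hnorm n j w) →
      ∏ j ∈ Finset.range k, (Hnorm n (j + 1) w / Hnorm n j w) = Hnorm n k w := by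
  intro k
  induction k with
  | zero => intro _; rw [Finset.range_zero, Finset.prod_empty, Hnorm_zero]
  | succ K ih =>
    intro h
    rw [Finset.prod_range_succ, ih (fun j hj => h j (by omega))]
    rw [mul_comm, div_mul_cancel₀ _ (ne_of_gt (h K (by omega)))]

lemma F_superadd {n k : ℕ} (hk1 : 1 ≤ k) (hkn : k ≤ n) {x y : Fin n → ℝ}
    (hx : Gam (Finset.univ : Finset (Fin n)) k x) (hy : Gam (Finset.univ : Finset (Fin n)) k y) :
    Hnorm n k x ^ ((1:ℝ)/k) + Hnorm n k y ^ ((1:ℝ)/k) ≤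
      Hnorm n k (fun i => x i + y i) ^ ((1:ℝ)/k) := by
  have hcard : (Finset.univ : Finset (Fin n)).card = n := Finset.card_fin n
  set z : Fin n → ℝ := fun i => x i + y i with hzdef
  have hz : Gam (Finset.univ : Finset (Fin n)) k z :=
    (ML_superadd k hk1 Finset.univ x y (by rw [hcard]; exact hkn) hx hy).1
  set a : ℕ → ℝ := fun j => Hnorm n (j + 1) x / Hnorm n j x with hadef
  set b : ℕ → ℝ := fun j => Hnorm n (j + 1) y / Hnorm n j y with hbdef
  set c : ℕ → ℝ := fun j => Hnorm n (j + 1) z / Hnorm n j z with hcdef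
  have ha : ∀ j ∈ Finset.range k, 0 < a j := fun j hj => by
    rw [Finset.mem_range] at hj
    exact div_pos (Hnorm_pos_of_Gam (by omega) hkn hx) (Hnorm_pos_of_Gam (by omega) hkn hx)
  have hb : ∀ j ∈ Finset.range k, 0 < b j := fun j hj => by
    rw [Finset.mem_range] at hj
    exact div_pos (Hnorm_pos_of_Gam (by omega) hkn hy) (Hnorm_pos_of_Gam (by omega) hkn hy)
  have hc : ∀ j ∈ Finset.range k, 0 < c j := fun j hj => by
    rw [Finset.mem_range] at hj
    exact div_pos (Hnorm_pos_of_Gam (by omega) hkn hz) (Hnorm_pos_of_Gam (by omega) hkn hz)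
  -- quotient superadditivity at each level
  have hquot : ∀ j ∈ Finset.range k, a j + b j ≤ c j := by
    intro j hj
    rw [Finset.mem_range] at hj
    have hML := (ML_superadd (j + 1) (by omega) Finset.univ x y (by rw [hcard]; omega)
      (hx.mono (by omega)) (hy.mono (by omega))).2
    simp only [Nat.add_sub_cancel] at hML
    have hconv : ∀ w : Fin n → ℝ, 0 < ES (Finset.univ : Finset (Fin n)) j w →
        Hnorm n (j + 1) w / Hnorm n j w =
          ((n.choose j : ℕ) : ℝ) / ((n.choose (j + 1) : ℕ) : ℝ) *
            (ES Finset.univ (j + 1) w / ES Finset.univ j w) := by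
      intro w hw
      have h1 : (0:ℝ) < (n.choose j : ℕ) := by exact_mod_cast Nat.choose_pos (by omega)
      have h2 : (0:ℝ) < (n.choose (j + 1) : ℕ) := by exact_mod_cast Nat.choose_pos (by omega)
      rw [Hnorm_eq, Hnorm_eq]
      field_simp
    have hESx : 0 < ES (Finset.univ : Finset (Fin n)) j x := by
      rcases Nat.eq_zero_or_pos j with rfl | hj1
      · rw [ES_zero]; norm_num
      · exact hx j (by omega) (by omega)
    have hESy : 0 < ES (Finset.univ : Finset (Fin n)) j y := by
      rcases Nat.eq_zero_or_pos j with rfl | hj1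
      · rw [ES_zero]; norm_num
      · exact hy j (by omega) (by omega)
    have hESz : 0 < ES (Finset.univ : Finset (Fin n)) j z := by
      rcases Nat.eq_zero_or_pos j with rfl | hj1
      · rw [ES_zero]; norm_num
      · exact hz j (by omega) (by omega)
    have hcpos : (0:ℝ) ≤ ((n.choose j : ℕ) : ℝ) / ((n.choose (j + 1) : ℕ) : ℝ) := by positivity
    rw [hadef, hbdef, hcdef]
    simp only
    rw [hconv x hESx, hconv y hESy, hconv z hESz, ← mul_add]
    exact mul_le_mul_of_nonneg_left hML hcpos
  -- Mahler + telescope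
  have hmahler := mahler_aux hk1 a b ha hb
  have hmono : (∏ j ∈ Finset.range k, (a j + b j)) ^ ((1:ℝ)/k) ≤
      (∏ j ∈ Finset.range k, c j) ^ ((1:ℝ)/k) := by
    refine Real.rpow_le_rpow (le_of_lt (Finset.prod_pos (fun j hj =>
      add_pos (ha j hj) (hb j hj)))) ?_ (by positivity)
    exact Finset.prod_le_prod (fun j hj => le_of_lt (add_pos (ha j hj) (hb j hj))) hquot
  have htx : ∏ j ∈ Finset.range k, a j = Hnorm n k x :=
    Hnorm_telescope x k (fun j hj => Hnorm_pos_of_Gam hj hkn hx)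
  have hty : ∏ j ∈ Finset.range k, b j = Hnorm n k y :=
    Hnorm_telescope y k (fun j hj => Hnorm_pos_of_Gam hj hkn hy)
  have htz : ∏ j ∈ Finset.range k, c j = Hnorm n k z :=
    Hnorm_telescope z k (fun j hj => Hnorm_pos_of_Gam hj hkn hz)
  rw [htx, hty] at hmahler
  rw [htz] at hmono
  exact le_trans hmahler hmono

lemma Hnorm_smul (n k : ℕ) (κ : Fin n → ℝ) (c : ℝ) :
    Hnorm n k (fun i => c * κ i) = c ^ k * Hnorm n k κ := by
  rw [Hnorm_eq, Hnorm_eq, ES_smul, mul_div_assoc]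

lemma rpow_smul_aux {c H : ℝ} (hc : 0 < c) (hH : 0 < H) {k : ℕ} (hk : 1 ≤ k) :
    (c ^ k * H) ^ ((1:ℝ)/k) = c * H ^ ((1:ℝ)/k) := by
  rw [Real.mul_rpow (by positivity) (le_of_lt hH)]
  congr 1
  rw [← Real.rpow_natCast c k, ← Real.rpow_mul (le_of_lt hc)]
  have hkne : (k:ℝ) ≠ 0 := by positivity
  rw [mul_one_div, div_self hkne, Real.rpow_one]

theorem stmt_9 (n k : ℕ) (hk1 : 1 ≤ k) (hkn : k ≤ n) :
    ConcaveOn ℝ (GardingCone n k) (fun κ => (Hnorm n k κ) ^ ((1 : ℝ) / k)) := by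
  have hcard : (Finset.univ : Finset (Fin n)).card = n := Finset.card_fin n
  have hsmul_eq : ∀ (c : ℝ) (w : Fin n → ℝ), c • w = fun i => c * w i := by
    intro c w; funext i; simp
  have hadd_eq : ∀ (u v : Fin n → ℝ), u + v = fun i => u i + v i := by
    intro u v; funext i; simp
  have hconv : Convex ℝ (GardingCone n k) := by
    intro x hx y hy p q hp hq hpq
    rcases eq_or_lt_of_le hp with rfl | hp'
    · have : q = 1 := by linarith
      subst this
      simpa using hy
    rcases eq_or_lt_of_le hq with rfl | hq'
    · have : p = 1 := by linarith
      subst this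
      simpa using hx
    rw [mem_GardingCone_iff hkn] at hx hy ⊢
    have hu : Gam (Finset.univ : Finset (Fin n)) k (fun i => p * x i) := Gam_smul hp' hx
    have hv : Gam (Finset.univ : Finset (Fin n)) k (fun i => q * y i) := Gam_smul hq' hy
    have := (ML_superadd k hk1 Finset.univ _ _ (by rw [hcard]; exact hkn) hu hv).1
    have heq : p • x + q • y = fun i => p * x i + q * y i := by
      funext i; simp
    rw [heq]
    exact this
  refine ⟨hconv, ?_⟩
  intro x hx y hy p q hp hq hpq
  rcases eq_or_lt_of_le hp with rfl | hp'
  · have : q = 1 := by linarith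
    subst this
    simp
  rcases eq_or_lt_of_le hq with rfl | hq'
  · have : p = 1 := by linarith
    subst this
    simp
  rw [mem_GardingCone_iff hkn] at hx hy
  have hu : Gam (Finset.univ : Finset (Fin n)) k (fun i => p * x i) := Gam_smul hp' hx
  have hv : Gam (Finset.univ : Finset (Fin n)) k (fun i => q * y i) := Gam_smul hq' hy
  have hsup := F_superadd hk1 hkn hu hv
  have hHx : 0 < Hnorm n k x := Hnorm_pos_of_Gam le_rfl hkn hx
  have hHy : 0 < Hnorm n k y := Hnorm_pos_of_Gam le_rfl hkn hy
  have hux : Hnorm n k (fun i => p * x i) ^ ((1:ℝ)/k) = p * Hnorm n k x ^ ((1:ℝ)/k) := by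
    rw [Hnorm_smul, rpow_smul_aux hp' hHx hk1]
  have huy : Hnorm n k (fun i => q * y i) ^ ((1:ℝ)/k) = q * Hnorm n k y ^ ((1:ℝ)/k) := by
    rw [Hnorm_smul, rpow_smul_aux hq' hHy hk1]
  rw [hux, huy] at hsup
  have heq : p • x + q • y = fun i => p * x i + q * y i := by
    funext i; simp
  simp only [smul_eq_mul, heq]
  exact hsup
end
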